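/- Coercivity for the horizontal field on the slab: suppose |B| > |B|_c. Then there exists a constant C > 0, depending only on B, g and [ρ], such that for every continuously differentiable vector field v = (v₁, v₂) : ℝ × [−1,1] → ℝ² with v(x₁, −1) = v(x₁, 1) = 0 for all x₁ ∈ ℝ, satisfying the divergence-free condition ∂₁v₁ + ∂₂v₂ = 0 on Ω, and with v and its first-order partial derivatives square-integrable on Ω = ℝ × (−1,1), one has B²∫_Ω |∂₁v|² dx − g[ρ]∫_ℝ v₂(x₁, 0)² dx₁ ≥ C ( ∫_Ω (∂₁v₁)² dx + ∫_Ω ( v₂² + (∂₁v₂)² + (∂₂v₂)² ) dx ). -/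

import Mathlib

open MeasureTheory Set Filter Topology

noncomputable section

/-- The set of Rayleigh quotients defining the critical magnetic number `|B|_c`. -/
def BcSet (g ρp ρm : ℝ) : Set ℝ :=
  {r | ∃ φ : ℝ → ℝ, (∃ K, LipschitzWith K φ) ∧ φ (-1) = 0 ∧ φ 1 = 0 ∧
    ¬ (∀ᵐ y ∂(volume.restrict (Icc (-1:ℝ) 1)), φ y = 0) ∧
    r = g * (ρp - ρm) * (φ 0) ^ 2 / ∫ y in (-1:ℝ)..1, (deriv φ y) ^ 2}

/-- The set of quotients defining the vertical critical frequency `|ξ|_{vc}^B`. -/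
def XivcSet (g ρp ρm B : ℝ) : Set ℝ :=
  {r | ∃ φ : ℝ → ℝ, ContDiff ℝ 2 φ ∧ φ (-1) = 0 ∧ φ 1 = 0 ∧
    deriv φ (-1) = 0 ∧ deriv φ 1 = 0 ∧
    0 < g * (ρp - ρm) * (φ 0) ^ 2 - B ^ 2 * ∫ y in (-1:ℝ)..1, (deriv φ y) ^ 2 ∧
    r = (B ^ 2 * ∫ y in (-1:ℝ)..1, (deriv (deriv φ) y) ^ 2) /
        (g * (ρp - ρm) * (φ 0) ^ 2 - B ^ 2 * ∫ y in (-1:ℝ)..1, (deriv φ y) ^ 2)}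

/-- The set of quotients defining the horizontal critical frequency `|ξ|_{hc}^B`. -/
def XihcSet (g ρp ρm B : ℝ) : Set ℝ :=
  {r | ∃ φ : ℝ → ℝ, (∃ K, LipschitzWith K φ) ∧ φ (-1) = 0 ∧ φ 1 = 0 ∧
    ¬ (∀ᵐ y ∂(volume.restrict (Icc (-1:ℝ) 1)), φ y = 0) ∧
    r = (g * (ρp - ρm) * (φ 0) ^ 2 - B ^ 2 * ∫ y in (-1:ℝ)..1, (deriv φ y) ^ 2) /
        (B ^ 2 * ∫ y in (-1:ℝ)..1, (φ y) ^ 2)}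

/-- Partial derivative in the first (horizontal) variable. -/
def pd1 (f : ℝ × ℝ → ℝ) (x : ℝ × ℝ) : ℝ := deriv (fun t => f (t, x.2)) x.1

/-- Partial derivative in the second (vertical) variable. -/
def pd2 (f : ℝ × ℝ → ℝ) (x : ℝ × ℝ) : ℝ := deriv (fun t => f (x.1, t)) x.2

/-- The infinite slab `Ω = ℝ × (-1,1)`. -/
def Slab : Set (ℝ × ℝ) := {x : ℝ × ℝ | x.2 ∈ Ioo (-1:ℝ) 1}

/-!
On every vertical line `x₁ = const` the slice `y ↦ v₂(x₁, y)` is `C¹` on `[-1, 1]` and vanishes at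
`±1`; after a Lipschitz extension off `[-1, 1]` it competes in the supremum defining `|B|_c`, so
`g[ρ] v₂(x₁, 0)² ≤ |B|_c² ∫ (∂₂v₂)² dy`. The same slice obeys the one-dimensional Poincaré inequality
`∫ v₂² dy ≤ 16 ∫ (∂₂v₂)² dy`, obtained from `φ(y)² = ∫_{-1}^y 2φφ'` and `|2φφ'| ≤ εφ² + ε⁻¹φ'²`.
Integrating in `x₁` and using `∂₁v₁ = -∂₂v₂`, the energy `B² ∫ |∂₁v|² - g[ρ] ∫ v₂(x₁, 0)²` is at
least `(B² - |B|_c²) ∫ (∂₂v₂)² + B² ∫ (∂₁v₂)²`, while `∫ (∂₁v₁)² + ∫ (v₂² + (∂₁v₂)² + (∂₂v₂)²)` is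
at most `18 ∫ (∂₂v₂)² + ∫ (∂₁v₂)²`; so `C = (B² - |B|_c²) / 18` works.
-/

lemma abs_two_mul_le_mul_sq_add_inv_mul_sq {x y ε : ℝ} (hε : 0 < ε) :
    |2 * x * y| ≤ ε * x ^ 2 + ε⁻¹ * y ^ 2 := by
  have h : ε * (ε * x ^ 2 + ε⁻¹ * y ^ 2 - |2 * x * y|) = (ε * |x| - |y|) ^ 2 := by
    rw [abs_mul, abs_mul, abs_two]
    field_simp
    rw [sub_sq, mul_pow, sq_abs, sq_abs]
    ring
  nlinarith [sq_nonneg (ε * |x| - |y|)]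

section Poincare

variable {φ : ℝ → ℝ} {a b : ℝ}

lemma sq_le_integral_abs_two_mul_deriv (hφ : ContDiff ℝ 1 φ) (ha : φ a = 0) {y : ℝ}
    (hy : y ∈ Icc a b) : φ y ^ 2 ≤ ∫ t in a..b, |2 * φ t * deriv φ t| := by
  have hderiv (t : ℝ) : HasDerivAt (fun t => φ t ^ 2) (2 * φ t * deriv φ t) t := by
    simpa using ((hφ.differentiable one_ne_zero t).hasDerivAt).fun_pow 2
  have hcont : Continuous fun t => 2 * φ t * deriv φ t :=
    (continuous_const.mul hφ.continuous).mul (hφ.continuous_deriv le_rfl)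
  calc φ y ^ 2 = ∫ t in a..y, 2 * φ t * deriv φ t := by
        rw [intervalIntegral.integral_eq_sub_of_hasDerivAt (fun t _ => hderiv t)
          (hcont.intervalIntegrable _ _), ha]
        ring
    _ ≤ ∫ t in a..y, |2 * φ t * deriv φ t| :=
        (le_abs_self _).trans (intervalIntegral.abs_integral_le_integral_abs hy.1)
    _ ≤ ∫ t in a..b, |2 * φ t * deriv φ t| :=
        intervalIntegral.integral_mono_interval le_rfl hy.1 hy.2
          (ae_of_all _ fun _ => abs_nonneg _) (hcont.abs.intervalIntegrable _ _)

lemma sq_le_mul_integral_sq_add_inv_mul_integral_deriv_sq (hφ : ContDiff ℝ 1 φ) (ha : φ a = 0)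
    {y : ℝ} (hy : y ∈ Icc a b) {ε : ℝ} (hε : 0 < ε) :
    φ y ^ 2 ≤ ε * (∫ t in a..b, φ t ^ 2) + ε⁻¹ * ∫ t in a..b, deriv φ t ^ 2 := by
  have hφ₂ : IntervalIntegrable (fun t => ε * φ t ^ 2) volume a b :=
    ((hφ.continuous.pow 2).intervalIntegrable _ _).const_mul _
  have hφ'₂ : IntervalIntegrable (fun t => ε⁻¹ * deriv φ t ^ 2) volume a b :=
    (((hφ.continuous_deriv le_rfl).pow 2).intervalIntegrable _ _).const_mul _
  have hbound : ∫ t in a..b, |2 * φ t * deriv φ t| ≤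
      ∫ t in a..b, (ε * φ t ^ 2 + ε⁻¹ * deriv φ t ^ 2) :=
    intervalIntegral.integral_mono_on (hy.1.trans hy.2)
      (((continuous_const.mul hφ.continuous).mul
        (hφ.continuous_deriv le_rfl)).abs.intervalIntegrable _ _)
      (hφ₂.add hφ'₂) fun t _ => abs_two_mul_le_mul_sq_add_inv_mul_sq hε
  rw [intervalIntegral.integral_add hφ₂ hφ'₂, intervalIntegral.integral_const_mul,
    intervalIntegral.integral_const_mul] at hbound
  exact (sq_le_integral_abs_two_mul_deriv hφ ha hy).trans hbound

theorem integral_sq_le_mul_integral_deriv_sq (hφ : ContDiff ℝ 1 φ) (ha : φ a = 0) (hab : a ≤ b) :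
    ∫ t in a..b, φ t ^ 2 ≤ 4 * (b - a) ^ 2 * ∫ t in a..b, deriv φ t ^ 2 := by
  rcases hab.eq_or_lt with rfl | hlt
  · simp
  have hε : 0 < (2 * (b - a))⁻¹ := inv_pos.mpr (by linarith)
  have hQ : ∫ t in a..b, φ t ^ 2 ≤ ∫ _ in a..b, ((2 * (b - a))⁻¹ * (∫ t in a..b, φ t ^ 2) +
      (2 * (b - a))⁻¹⁻¹ * ∫ t in a..b, deriv φ t ^ 2) :=
    intervalIntegral.integral_mono_on hab ((hφ.continuous.pow 2).intervalIntegrable _ _)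
      intervalIntegrable_const
      fun y hy => sq_le_mul_integral_sq_add_inv_mul_integral_deriv_sq hφ ha hy hε
  rw [intervalIntegral.integral_const, smul_eq_mul] at hQ
  have hL : b - a ≠ 0 := by linarith
  field_simp at hQ
  nlinarith

theorem sq_le_mul_integral_deriv_sq (hφ : ContDiff ℝ 1 φ) (ha : φ a = 0) {y : ℝ}
    (hy : y ∈ Icc a b) : φ y ^ 2 ≤ 4 * (b - a) * ∫ t in a..b, deriv φ t ^ 2 := by
  rcases (hy.1.trans hy.2).eq_or_lt with rfl | hlt
  · rw [le_antisymm hy.2 hy.1, ha]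
    simp
  have hε : 0 < (2 * (b - a))⁻¹ := inv_pos.mpr (by linarith)
  have hy := sq_le_mul_integral_sq_add_inv_mul_integral_deriv_sq hφ ha hy hε
  have hQ := integral_sq_le_mul_integral_deriv_sq hφ ha hlt.le
  have hL : b - a ≠ 0 := by linarith
  field_simp at hy
  nlinarith

end Poincare

lemma ContDiffOn.exists_lipschitzWith_eqOn_Icc {φ : ℝ → ℝ} {a b : ℝ}
    (hφ : ContDiffOn ℝ 1 φ (Icc a b)) : ∃ ψ : ℝ → ℝ, (∃ K, LipschitzWith K ψ) ∧ EqOn φ ψ (Icc a b) :=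
  have ⟨K, hK⟩ := hφ.exists_lipschitzOnWith one_ne_zero (convex_Icc a b) isCompact_Icc
  have ⟨ψ, hψ, hφψ⟩ := hK.extend_real
  ⟨ψ, ⟨K, hψ⟩, hφψ⟩

lemma Continuous.not_ae_restrict_Icc_eq_zero {ψ : ℝ → ℝ} (hψ : Continuous ψ) {a b x : ℝ}
    (hx : x ∈ Ioo a b) (hψx : ψ x ≠ 0) : ¬ ∀ᵐ y ∂(volume.restrict (Icc a b)), ψ y = 0 :=
  fun h => hψx <| Measure.eqOn_open_of_ae_eq (ae_restrict_of_ae_restrict_of_subset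
    Ioo_subset_Icc_self h) isOpen_Ioo hψ.continuousOn continuousOn_const hx

theorem mul_sq_le_of_mem_upperBounds_BcSet {g ρp ρm K : ℝ}
    (hK : K ∈ upperBounds (BcSet g ρp ρm)) (hK0 : 0 ≤ K) {φ : ℝ → ℝ} (hφ : ContDiff ℝ 1 φ)
    (hbot : φ (-1) = 0) (htop : φ 1 = 0) :
    g * (ρp - ρm) * φ 0 ^ 2 ≤ K * ∫ y in (-1:ℝ)..1, deriv φ y ^ 2 := by
  set D := ∫ y in (-1:ℝ)..1, deriv φ y ^ 2
  rcases eq_or_ne (φ 0) 0 with h0 | h0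
  · rw [h0]
    simpa using mul_nonneg hK0
      (intervalIntegral.integral_nonneg (by norm_num) fun y _ => sq_nonneg (deriv φ y))
  have hD : 0 < D := by
    have h8 := sq_le_mul_integral_deriv_sq hφ hbot (b := 1) (y := 0) (by norm_num)
    norm_num at h8
    nlinarith [sq_pos_of_ne_zero h0]
  obtain ⟨ψ, ⟨L, hψ⟩, hφψ⟩ := hφ.contDiffOn.exists_lipschitzWith_eqOn_Icc (a := -1) (b := 1)
  have hψ₀ : φ 0 = ψ 0 := hφψ (by norm_num)
  have hDψ : ∫ y in (-1:ℝ)..1, deriv ψ y ^ 2 = D :=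
    intervalIntegral.integral_congr_Ioo_of_le (by norm_num) fun y hy => by
      rw [(hφψ.eventuallyEq_of_mem (Icc_mem_nhds hy.1 hy.2)).deriv_eq]
  have hmem : g * (ρp - ρm) * φ 0 ^ 2 / D ∈ BcSet g ρp ρm :=
    ⟨ψ, ⟨L, hψ⟩, by rw [← hφψ (by norm_num), hbot], by rw [← hφψ (by norm_num), htop],
      hψ.continuous.not_ae_restrict_Icc_eq_zero (by norm_num : (0:ℝ) ∈ Ioo (-1) 1) (hψ₀ ▸ h0),
      by rw [hDψ, hψ₀]⟩
  calc g * (ρp - ρm) * φ 0 ^ 2 = g * (ρp - ρm) * φ 0 ^ 2 / D * D := by field_simp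
    _ ≤ K * D := mul_le_mul_of_nonneg_right (hK hmem) hD.le

lemma sq_mem_upperBounds_BcSet {g ρp ρm Bc : ℝ} (hBc : 0 < Bc)
    (hBcsq : Bc ^ 2 = sSup (BcSet g ρp ρm)) : Bc ^ 2 ∈ upperBounds (BcSet g ρp ρm) := by
  have hbdd : BddAbove (BcSet g ρp ρm) := by
    by_contra h
    rw [Real.sSup_of_not_bddAbove h] at hBcsq
    exact (pow_pos hBc 2).ne' hBcsq
  exact fun r hr => hBcsq ▸ le_csSup hbdd hr

lemma Integrable.sq_of_add_sq {α : Type*} [MeasurableSpace α] {μ : Measure α} {u w : α → ℝ}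
    (h : Integrable (fun x => u x ^ 2 + w x ^ 2) μ) (hu : AEStronglyMeasurable u μ)
    (hw : AEStronglyMeasurable w μ) :
    Integrable (fun x => u x ^ 2) μ ∧ Integrable (fun x => w x ^ 2) μ :=
  ⟨h.mono' (hu.pow 2) <| ae_of_all _ fun x => by
      simpa only [Real.norm_eq_abs, abs_sq] using le_add_of_nonneg_right (sq_nonneg (w x)),
    h.mono' (hw.pow 2) <| ae_of_all _ fun x => by
      simpa only [Real.norm_eq_abs, abs_sq] using le_add_of_nonneg_left (sq_nonneg (u x))⟩

lemma pd1_eq_fderiv {f : ℝ × ℝ → ℝ} (hf : Differentiable ℝ f) :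
    pd1 f = fun x => fderiv ℝ f x (1, 0) :=
  funext fun x => ((hf x).hasFDerivAt.comp_hasDerivAt x.1
    ((hasDerivAt_id x.1).prodMk (hasDerivAt_const x.1 x.2))).deriv

lemma pd2_eq_fderiv {f : ℝ × ℝ → ℝ} (hf : Differentiable ℝ f) :
    pd2 f = fun x => fderiv ℝ f x (0, 1) :=
  funext fun x => ((hf x).hasFDerivAt.comp_hasDerivAt x.2
    ((hasDerivAt_const x.2 x.1).prodMk (hasDerivAt_id x.2))).deriv

lemma ContDiff.continuous_pd1 {f : ℝ × ℝ → ℝ} (hf : ContDiff ℝ 1 f) : Continuous (pd1 f) := by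
  rw [pd1_eq_fderiv (hf.differentiable one_ne_zero)]
  exact (hf.continuous_fderiv one_ne_zero).clm_apply continuous_const

lemma ContDiff.continuous_pd2 {f : ℝ × ℝ → ℝ} (hf : ContDiff ℝ 1 f) : Continuous (pd2 f) := by
  rw [pd2_eq_fderiv (hf.differentiable one_ne_zero)]
  exact (hf.continuous_fderiv one_ne_zero).clm_apply continuous_const

lemma slab_eq_prod : Slab = univ ×ˢ Ioo (-1:ℝ) 1 := by
  ext x
  simp [Slab]

lemma measurableSet_slab : MeasurableSet Slab := by
  rw [slab_eq_prod]
  exact MeasurableSet.univ.prod measurableSet_Ioo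

lemma volume_restrict_slab :
    volume.restrict Slab = (volume : Measure ℝ).prod (volume.restrict (Ioo (-1:ℝ) 1)) := by
  rw [slab_eq_prod, Measure.volume_eq_prod, ← Measure.prod_restrict, Measure.restrict_univ]

section Slab

variable {F : ℝ × ℝ → ℝ}

lemma setIntegral_slab_eq_integral_intervalIntegral (hF : IntegrableOn F Slab) :
    ∫ x in Slab, F x = ∫ x₁, ∫ y in (-1:ℝ)..1, F (x₁, y) := by
  rw [IntegrableOn, volume_restrict_slab] at hF
  rw [volume_restrict_slab]
  simp only [intervalIntegral.integral_of_le (show (-1:ℝ) ≤ 1 by norm_num),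
    integral_Ioc_eq_integral_Ioo]
  exact integral_prod F hF

lemma integral_le_setIntegral_slab {u : ℝ → ℝ} (hu : ∀ x₁, 0 ≤ u x₁)
    (hF : IntegrableOn F Slab) (h : ∀ x₁, u x₁ ≤ ∫ y in (-1:ℝ)..1, F (x₁, y)) :
    ∫ x₁, u x₁ ≤ ∫ x in Slab, F x := by
  have hslices : Integrable (fun x₁ => ∫ y in (-1:ℝ)..1, F (x₁, y)) := by
    rw [IntegrableOn, volume_restrict_slab] at hF
    simpa only [intervalIntegral.integral_of_le (show (-1:ℝ) ≤ 1 by norm_num),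
      integral_Ioc_eq_integral_Ioo] using hF.integral_prod_left
  rw [setIntegral_slab_eq_integral_intervalIntegral hF]
  exact integral_mono_of_nonneg (ae_of_all _ hu) hslices (ae_of_all _ h)

end Slab

theorem setIntegral_slab_sq_le_mul_setIntegral_pd2_sq {f : ℝ × ℝ → ℝ} (hf : ContDiff ℝ 1 f)
    (hbot : ∀ x₁, f (x₁, -1) = 0) (hint : IntegrableOn (fun x => f x ^ 2) Slab)
    (hint₂ : IntegrableOn (fun x => pd2 f x ^ 2) Slab) :
    ∫ x in Slab, f x ^ 2 ≤ 16 * ∫ x in Slab, pd2 f x ^ 2 := by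
  rw [setIntegral_slab_eq_integral_intervalIntegral hint, ← integral_const_mul]
  refine integral_le_setIntegral_slab
    (fun x₁ => intervalIntegral.integral_nonneg (by norm_num) fun y _ => sq_nonneg _)
    (hint₂.const_mul 16) fun x₁ => ?_
  have := integral_sq_le_mul_integral_deriv_sq (hf.comp (contDiff_const.prodMk contDiff_id))
    (hbot x₁) (show (-1:ℝ) ≤ 1 by norm_num)
  rw [intervalIntegral.integral_const_mul]
  norm_num at this ⊢
  exact this

theorem mul_integral_trace_sq_le_mul_setIntegral_pd2_sq {g ρp ρm K : ℝ}
    (hK : K ∈ upperBounds (BcSet g ρp ρm)) (hK0 : 0 ≤ K) (hgρ : 0 ≤ g * (ρp - ρm))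
    {f : ℝ × ℝ → ℝ} (hf : ContDiff ℝ 1 f) (hbot : ∀ x₁, f (x₁, -1) = 0)
    (htop : ∀ x₁, f (x₁, 1) = 0)
    (hint₂ : IntegrableOn (fun x => pd2 f x ^ 2) Slab) :
    g * (ρp - ρm) * ∫ x₁, f (x₁, 0) ^ 2 ≤ K * ∫ x in Slab, pd2 f x ^ 2 := by
  rw [← integral_const_mul, ← integral_const_mul]
  refine integral_le_setIntegral_slab (fun x₁ => mul_nonneg hgρ (sq_nonneg _))
    (hint₂.const_mul K) fun x₁ => ?_
  rw [intervalIntegral.integral_const_mul]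
  exact mul_sq_le_of_mem_upperBounds_BcSet hK hK0
    (hf.comp (contDiff_const.prodMk contDiff_id)) (hbot x₁) (htop x₁)

theorem horizontal_coercivity_general
    (ρp ρm g B Bc : ℝ)
    (hρ : ρm < ρp) (hg : 0 < g)
    (hBc : 0 < Bc) (hBcsq : Bc ^ 2 = sSup (BcSet g ρp ρm))
    (hBgt : Bc < |B|) :
    ∃ C : ℝ, 0 < C ∧
      ∀ v : ℝ × ℝ → ℝ × ℝ, ContDiff ℝ 1 v →
        (∀ x₁ : ℝ, v (x₁, -1) = 0) → (∀ x₁ : ℝ, v (x₁, 1) = 0) →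
        (∀ x ∈ Slab, pd1 (fun z => (v z).1) x + pd2 (fun z => (v z).2) x = 0) →
        IntegrableOn (fun x => ((v x).1) ^ 2 + ((v x).2) ^ 2) Slab volume →
        IntegrableOn (fun x => (pd1 (fun z => (v z).1) x) ^ 2 + (pd1 (fun z => (v z).2) x) ^ 2)
          Slab volume →
        IntegrableOn (fun x => (pd2 (fun z => (v z).1) x) ^ 2 + (pd2 (fun z => (v z).2) x) ^ 2)
          Slab volume →
        C * ((∫ x in Slab, (pd1 (fun z => (v z).1) x) ^ 2) +
              ∫ x in Slab, (((v x).2) ^ 2 + (pd1 (fun z => (v z).2) x) ^ 2 +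
                (pd2 (fun z => (v z).2) x) ^ 2)) ≤
          B ^ 2 * (∫ x in Slab,
              ((pd1 (fun z => (v z).1) x) ^ 2 + (pd1 (fun z => (v z).2) x) ^ 2)) -
            g * (ρp - ρm) * ∫ x₁ : ℝ, ((v (x₁, 0)).2) ^ 2 := by
  have hupper := sq_mem_upperBounds_BcSet hBc hBcsq
  have hBB : Bc ^ 2 < B ^ 2 := sq_abs B ▸ pow_lt_pow_left₀ hBgt hBc.le two_ne_zero
  refine ⟨(B ^ 2 - Bc ^ 2) / 18, by linarith, ?_⟩
  intro v hv hbot htop hdiv hv_int hd1_int hd2_int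
  set f₁ : ℝ × ℝ → ℝ := fun z => (v z).1
  set f₂ : ℝ × ℝ → ℝ := fun z => (v z).2
  have hf₁ : ContDiff ℝ 1 f₁ := contDiff_fst.comp hv
  have hf₂ : ContDiff ℝ 1 f₂ := contDiff_snd.comp hv
  have hf₂bot (x₁ : ℝ) : f₂ (x₁, -1) = 0 := by simp [f₂, hbot]
  have hf₂top (x₁ : ℝ) : f₂ (x₁, 1) = 0 := by simp [f₂, htop]
  obtain ⟨-, hQ⟩ := Integrable.sq_of_add_sq hv_int
    hf₁.continuous.aestronglyMeasurable hf₂.continuous.aestronglyMeasurable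
  obtain ⟨hA, hP⟩ := Integrable.sq_of_add_sq hd1_int
    hf₁.continuous_pd1.aestronglyMeasurable hf₂.continuous_pd1.aestronglyMeasurable
  obtain ⟨-, hA'⟩ := Integrable.sq_of_add_sq hd2_int
    hf₁.continuous_pd2.aestronglyMeasurable hf₂.continuous_pd2.aestronglyMeasurable
  have hdiv_sq : ∫ x in Slab, pd1 f₁ x ^ 2 = ∫ x in Slab, pd2 f₂ x ^ 2 :=
    setIntegral_congr_fun measurableSet_slab fun x hx => by
      rw [eq_neg_of_add_eq_zero_left (hdiv x hx), neg_sq]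
  have htrace : g * (ρp - ρm) * ∫ x₁, (v (x₁, 0)).2 ^ 2 ≤ Bc ^ 2 * ∫ x in Slab, pd2 f₂ x ^ 2 :=
    mul_integral_trace_sq_le_mul_setIntegral_pd2_sq hupper (sq_nonneg Bc)
      (mul_nonneg hg.le (sub_nonneg.mpr hρ.le)) hf₂ hf₂bot hf₂top hA'
  have hpoincare : ∫ x in Slab, (v x).2 ^ 2 ≤ 16 * ∫ x in Slab, pd2 f₂ x ^ 2 :=
    setIntegral_slab_sq_le_mul_setIntegral_pd2_sq hf₂ hf₂bot hQ hA'
  have hsplit : ∫ x in Slab, ((v x).2 ^ 2 + pd1 f₂ x ^ 2 + pd2 f₂ x ^ 2) =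
      (∫ x in Slab, (v x).2 ^ 2) + (∫ x in Slab, pd1 f₂ x ^ 2) + ∫ x in Slab, pd2 f₂ x ^ 2 := by
    rw [integral_add (hQ.fun_add hP) hA', integral_add hQ hP]
  rw [hsplit, integral_add hA hP, hdiv_sq]
  nlinarith [setIntegral_nonneg (μ := volume) measurableSet_slab fun x _ => sq_nonneg (pd2 f₂ x),
    setIntegral_nonneg (μ := volume) measurableSet_slab fun x _ => sq_nonneg (pd1 f₂ x)]

/-- coercivity for the horizontal field: if `|B| > |B|_c` then there is `C > 0`
(depending only on `B`, `g`, `[ρ]`) such that for every `C¹` divergence-free vector field `v`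
on the slab, vanishing on the fixed boundaries and square integrable together with its first
derivatives, `B²∫_Ω |∂₁v|² - g[ρ]∫_ℝ v₂(x₁,0)² ≥ C(∫_Ω (∂₁v₁)² + ∫_Ω (v₂² + (∂₁v₂)² + (∂₂v₂)²))`. -/
theorem horizontal_coercivity
    (ρp ρm g B Bc : ℝ)
    (hρm : 0 < ρm) (hρ : ρm < ρp) (hg : 0 < g)
    (hB : B ≠ 0) (hBc : 0 < Bc) (hBcsq : Bc ^ 2 = sSup (BcSet g ρp ρm))
    (hBgt : Bc < |B|) :
    ∃ C : ℝ, 0 < C ∧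
      ∀ v : ℝ × ℝ → ℝ × ℝ, ContDiff ℝ 1 v →
        (∀ x₁ : ℝ, v (x₁, -1) = 0) → (∀ x₁ : ℝ, v (x₁, 1) = 0) →
        (∀ x ∈ Slab, pd1 (fun z => (v z).1) x + pd2 (fun z => (v z).2) x = 0) →
        IntegrableOn (fun x => ((v x).1) ^ 2 + ((v x).2) ^ 2) Slab volume →
        IntegrableOn (fun x => (pd1 (fun z => (v z).1) x) ^ 2 + (pd1 (fun z => (v z).2) x) ^ 2)
          Slab volume →
        IntegrableOn (fun x => (pd2 (fun z => (v z).1) x) ^ 2 + (pd2 (fun z => (v z).2) x) ^ 2)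
          Slab volume →
        C * ((∫ x in Slab, (pd1 (fun z => (v z).1) x) ^ 2) +
              ∫ x in Slab, (((v x).2) ^ 2 + (pd1 (fun z => (v z).2) x) ^ 2 +
                (pd2 (fun z => (v z).2) x) ^ 2)) ≤
          B ^ 2 * (∫ x in Slab,
              ((pd1 (fun z => (v z).1) x) ^ 2 + (pd1 (fun z => (v z).2) x) ^ 2)) -
            g * (ρp - ρm) * ∫ x₁ : ℝ, ((v (x₁, 0)).2) ^ 2 :=
  horizontal_coercivity_general ρp ρm g B Bc hρ hg hBc hBcsq hBgt

end
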